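/- Let g ≥ 0 and n ≥ 1 be integers with 2g + n − 2 > 0, and suppose (ℓ_j)_{j≥1} is a sequence of positive reals such that ∑_{j≥1} Φ(ℓ_j) = (π²/4)(2g + n − 2), where Φ(L) = π²/4 − 𝓛(√(1−e^{−L})) − 𝓛(√(1−e^{−L})/(1+√(1−e^{−L}))). Then for every L > 0, #{j : ℓ_j ≤ L} ≤ π²(2g + n − 2)·e^L/(L+2). -/

import Mathlib

open Real MeasureTheory

/-- The real dilogarithm, defined for `x ≤ 1` via the integral
`Li₂(x) = -∫₀ˣ log(1-t)/t dt`. -/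
noncomputable def Li2 (x : ℝ) : ℝ := -∫ t in (0:ℝ)..x, Real.log (1 - t) / t

/-- The Rogers dilogarithm `𝓛(x) = Li₂(x) + (1/2)·log|x|·log(1-x)`
(note `Real.log` of a negative number is the log of its absolute value,
and `Real.log 0 = 0`, so this formula also covers `x ≤ 0` and the endpoints). -/
noncomputable def rogersL (x : ℝ) : ℝ := Li2 x + (1/2) * Real.log x * Real.log (1 - x)

/-!
Put `x = √(1 - e^{-L})`, so that `1 - x² = e^{-L}` and the lower bound `Φ(L) ≥ ((L+2)/4)·e^{-L}`
becomes `G(x) ≥ 0` for `G(x) = π²/4 - 𝓛(x) - 𝓛(x/(1+x)) - (1-x²)(2 - log(1-x²))/4`.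
The function `G` is continuous on `[0,1]` and non-increasing: the numerator of `G'` is `≤ 0`
because `log y, log(1-y) ≤ 0` and `y² ≤ (1+y²)·log(1+y)`. Moreover `G(1) = π²/4 - 𝓛(1) - 𝓛(1/2)`
vanishes, since `𝓛(1) = ζ(2) = π²/6` (integrate the power series of `-log(1-t)/t` termwise) and
`𝓛(1/2) = π²/12` by the reflection formula `𝓛(x) + 𝓛(1-x) = π²/6`.
As `(L+2)·e^{-L}` is decreasing, each `ℓ_j ≤ L` contributes at least `((L+2)/4)·e^{-L}` to the
series, which bounds the number of such `j`.
-/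

open Set Filter Topology

lemma hasSum_pow_div_succ {t : ℝ} (h : |t| < 1) (ht : t ≠ 0) :
    HasSum (fun n : ℕ => t ^ n / (n + 1)) (-log (1 - t) / t) := by
  have h' := (hasSum_pow_div_log_of_abs_lt_one h).div_const t
  rwa [show (fun n : ℕ => t ^ (n + 1) / (n + 1) / t) = fun n : ℕ => t ^ n / (n + 1) from
    funext fun n => by field_simp; ring] at h'

lemma hasSum_one_div_succ_sq : HasSum (fun n : ℕ => 1 / ((n : ℝ) + 1) ^ 2) (π ^ 2 / 6) := by
  simpa using (hasSum_nat_add_iff' 1).2 hasSum_zeta_two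

lemma lintegral_pow_div_succ (n : ℕ) :
    ∫⁻ t in Ioo (0 : ℝ) 1, ENNReal.ofReal (t ^ n / (n + 1)) =
      ENNReal.ofReal (1 / ((n : ℝ) + 1) ^ 2) := by
  have hint : ∫ t in Ioo (0 : ℝ) 1, t ^ n / (n + 1) = 1 / ((n : ℝ) + 1) ^ 2 := by
    rw [← integral_Ioc_eq_integral_Ioo, ← intervalIntegral.integral_of_le zero_le_one,
      intervalIntegral.integral_div, integral_pow]
    rw [one_pow, zero_pow n.succ_ne_zero, sub_zero]
    field_simp
  rw [← hint, ofReal_integral_eq_lintegral_ofReal]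
  · exact ((continuous_pow n).div_const _).integrableOn_Icc.mono_set Ioo_subset_Icc_self
  · exact (ae_restrict_iff' measurableSet_Ioo).2 (ae_of_all _ fun t ht => by
      have := ht.1.le; positivity)

lemma lintegral_neg_log_one_sub_div :
    ∫⁻ t in Ioo (0 : ℝ) 1, ENNReal.ofReal (-log (1 - t) / t) =
      ENNReal.ofReal (π ^ 2 / 6) := by
  have hseries : ∀ t ∈ Ioo (0 : ℝ) 1,
      ENNReal.ofReal (-log (1 - t) / t) = ∑' n : ℕ, ENNReal.ofReal (t ^ n / (n + 1)) := by
    intro t ht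
    have h := hasSum_pow_div_succ (abs_lt.2 ⟨by linarith [ht.1], ht.2⟩) ht.1.ne'
    rw [← h.tsum_eq, ENNReal.ofReal_tsum_of_nonneg (fun n => by have := ht.1.le; positivity)
      h.summable]
  rw [setLIntegral_congr_fun measurableSet_Ioo hseries,
    lintegral_tsum fun n => (by fun_prop : Measurable _).ennreal_ofReal.aemeasurable]
  simp_rw [lintegral_pow_div_succ]
  rw [← ENNReal.ofReal_tsum_of_nonneg (fun n => by positivity) hasSum_one_div_succ_sq.summable,
    hasSum_one_div_succ_sq.tsum_eq]

lemma log_one_sub_div_nonpos {t : ℝ} (ht : t ∈ Ioo (0 : ℝ) 1) : log (1 - t) / t ≤ 0 :=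
  div_nonpos_of_nonpos_of_nonneg (log_nonpos (by linarith [ht.2]) (by linarith [ht.1])) ht.1.le

lemma lintegral_enorm_log_one_sub_div :
    ∫⁻ t in Ioo (0 : ℝ) 1, ‖log (1 - t) / t‖ₑ = ENNReal.ofReal (π ^ 2 / 6) := by
  rw [← lintegral_neg_log_one_sub_div]
  refine setLIntegral_congr_fun measurableSet_Ioo fun t ht => ?_
  rw [Real.enorm_eq_ofReal_abs, abs_of_nonpos (log_one_sub_div_nonpos ht), neg_div]

lemma integrableOn_log_one_sub_div :
    IntegrableOn (fun t : ℝ => log (1 - t) / t) (Icc 0 1) := by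
  rw [integrableOn_Icc_iff_integrableOn_Ioo]
  refine ⟨(by fun_prop : Measurable fun t : ℝ => log (1 - t) / t).aestronglyMeasurable, ?_⟩
  rw [hasFiniteIntegral_def, lintegral_enorm_log_one_sub_div]
  exact ENNReal.ofReal_lt_top

lemma Li2_one : Li2 1 = π ^ 2 / 6 := by
  have h := integral_eq_lintegral_of_nonneg_ae (μ := volume.restrict (Ioo (0 : ℝ) 1))
    (f := fun t => -log (1 - t) / t)
    ((ae_restrict_iff' measurableSet_Ioo).2 (ae_of_all _ fun t ht => by
      simpa [neg_div] using log_one_sub_div_nonpos ht))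
    (by fun_prop : Measurable fun t : ℝ => -log (1 - t) / t).aestronglyMeasurable
  rw [lintegral_neg_log_one_sub_div, ENNReal.toReal_ofReal (by positivity)] at h
  rw [Li2, intervalIntegral.integral_of_le zero_le_one, integral_Ioc_eq_integral_Ioo, ← h,
    ← integral_neg]
  simp only [neg_div]

lemma continuousOn_Li2 : ContinuousOn Li2 (Icc 0 1) := by
  have h := intervalIntegral.continuousOn_primitive_interval (a := (0 : ℝ)) (b := 1)
    (μ := volume) (by rw [uIcc_of_le zero_le_one]; exact integrableOn_log_one_sub_div)
  rw [uIcc_of_le zero_le_one] at h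
  exact h.neg

lemma hasDerivAt_Li2 {x : ℝ} (hx : x ∈ Ioo (0 : ℝ) 1) :
    HasDerivAt Li2 (-(log (1 - x) / x)) x := by
  have hint : IntervalIntegrable (fun t : ℝ => log (1 - t) / t) volume 0 x :=
    (integrableOn_log_one_sub_div.mono_set (by
      rw [uIcc_of_le hx.1.le]; exact Icc_subset_Icc_right hx.2.le)).intervalIntegrable
  have hcont : ContinuousAt (fun t : ℝ => log (1 - t) / t) x :=
    ((continuousAt_log (by linarith [hx.2])).comp (by fun_prop)).div continuousAt_id hx.1.ne'
  have hmeas : Measurable fun t : ℝ => log (1 - t) / t := by fun_prop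
  exact (intervalIntegral.integral_hasDerivAt_right hint
    hmeas.stronglyMeasurable.stronglyMeasurableAtFilter hcont).neg

lemma tendsto_log_mul_log_one_sub_nhds_zero :
    Tendsto (fun x : ℝ => log x * log (1 - x)) (𝓝 0) (𝓝 0) := by
  have hbigO : (fun x : ℝ => log (1 - x)) =O[𝓝 0] fun x => x := by
    simpa using (((hasDerivAt_id (0 : ℝ)).const_sub 1).log (by norm_num)).isBigO_sub
  refine ((Asymptotics.isBigO_refl log (𝓝 0)).mul hbigO).trans_tendsto ?_
  simpa [mul_comm] using continuous_mul_log.tendsto 0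

-- With the junk value `log 0 = 0` this is continuous also at `0` and `1`.
lemma continuous_log_mul_log_one_sub : Continuous fun x : ℝ => log x * log (1 - x) := by
  rw [continuous_iff_continuousAt]
  intro x
  by_cases hx0 : x = 0
  · subst hx0
    simpa [ContinuousAt] using tendsto_log_mul_log_one_sub_nhds_zero
  by_cases hx1 : x = 1
  · subst hx1
    have h := tendsto_log_mul_log_one_sub_nhds_zero.comp
      ((continuous_sub_left (1 : ℝ)).tendsto' 1 0 (sub_self 1))
    simpa [ContinuousAt, Function.comp_def, mul_comm] using h
  exact (continuousAt_log hx0).mul ((continuousAt_log (sub_ne_zero.2 (Ne.symm hx1))).comp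
    (by fun_prop))

lemma continuousOn_rogersL : ContinuousOn rogersL (Icc 0 1) := by
  have h := continuousOn_Li2.add ((continuous_log_mul_log_one_sub.const_mul (1 / 2)).continuousOn)
  refine h.congr fun x _ => ?_
  simp only [rogersL, Pi.add_apply]
  ring

lemma rogersL_zero : rogersL 0 = 0 := by simp [rogersL, Li2]

lemma rogersL_one : rogersL 1 = π ^ 2 / 6 := by simp [rogersL, Li2_one]

lemma hasDerivAt_rogersL {x : ℝ} (hx : x ∈ Ioo (0 : ℝ) 1) :
    HasDerivAt rogersL (-(log (1 - x) / x + log x / (1 - x)) / 2) x := by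
  have hx1 : 1 - x ≠ 0 := by linarith [hx.2]
  have hlog : HasDerivAt (fun y => log (1 - y)) (-1 / (1 - x)) x := by
    simpa using ((hasDerivAt_id x).const_sub 1).log hx1
  refine ((hasDerivAt_Li2 hx).add (((hasDerivAt_log hx.1.ne').const_mul (1 / 2)).mul hlog)
    |>.congr_deriv ?_)
  field_simp
  ring

theorem rogersL_add_rogersL_one_sub {x : ℝ} (hx : x ∈ Icc (0 : ℝ) 1) :
    rogersL x + rogersL (1 - x) = π ^ 2 / 6 := by
  set E : ℝ → ℝ := fun y => rogersL y + rogersL (1 - y)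
  have hE0 : E 0 = π ^ 2 / 6 := by simp [E, rogersL_zero, rogersL_one]
  rcases hx.1.eq_or_lt with rfl | hx0
  · exact hE0
  have hcont : ContinuousOn E (Icc 0 1) :=
    continuousOn_rogersL.add (continuousOn_rogersL.comp (by fun_prop) fun y hy =>
      ⟨by linarith [hy.2], by linarith [hy.1]⟩)
  -- The derivative of `rogersL` is invariant under `y ↦ 1 - y`.
  have hderiv : ∀ y ∈ Ioo (0 : ℝ) 1, HasDerivAt E 0 y := by
    intro y hy
    have hy' : 1 - y ∈ Ioo (0 : ℝ) 1 := ⟨by linarith [hy.2], by linarith [hy.1]⟩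
    refine (hasDerivAt_rogersL hy).add
      ((hasDerivAt_rogersL hy').comp y ((hasDerivAt_id y).const_sub 1)) |>.congr_deriv ?_
    rw [sub_sub_cancel]
    ring
  obtain ⟨c, hc, hslope⟩ := exists_hasDerivAt_eq_slope E (fun _ => 0) hx0
    (hcont.mono (Icc_subset_Icc_right hx.2)) fun y hy => hderiv y ⟨hy.1, hy.2.trans_le hx.2⟩
  rw [eq_comm, div_eq_zero_iff, sub_eq_zero] at hslope
  rcases hslope with h | h
  · exact h.trans hE0
  · linarith

lemma rogersL_half : rogersL (1 / 2) = π ^ 2 / 12 := by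
  have h := rogersL_add_rogersL_one_sub (x := 1 / 2) ⟨by norm_num, by norm_num⟩
  norm_num at h ⊢
  linarith

noncomputable def dilogGap (x : ℝ) : ℝ :=
  π ^ 2 / 4 - rogersL x - rogersL (x / (1 + x)) - (1 - x ^ 2) * (2 - log (1 - x ^ 2)) / 4

lemma continuousOn_dilogGap : ContinuousOn dilogGap (Icc 0 1) := by
  have hmaps : MapsTo (fun x : ℝ => x / (1 + x)) (Icc 0 1) (Icc 0 1) := fun x hx =>
    ⟨div_nonneg hx.1 (by linarith [hx.1]),
      (div_le_one (by linarith [hx.1])).2 (by linarith [hx.1])⟩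
  have hlast : Continuous fun x : ℝ => (1 - x ^ 2) * (2 - log (1 - x ^ 2)) / 4 := by
    have h := (continuous_mul_log.comp (by fun_prop : Continuous fun x : ℝ => 1 - x ^ 2))
    refine (((by fun_prop : Continuous fun x : ℝ => 2 * (1 - x ^ 2)).sub h).div_const 4).congr
      fun x => by simp only [Pi.sub_apply, Function.comp_apply]; ring
  exact ((continuousOn_const.sub continuousOn_rogersL).sub
    (continuousOn_rogersL.comp (by fun_prop (disch := intro x hx; linarith [hx.1])) hmaps)).sub
    hlast.continuousOn

lemma dilogGap_one : dilogGap 1 = 0 := by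
  have h : (1 : ℝ) / (1 + 1) = 1 / 2 := by norm_num
  simp only [dilogGap, rogersL_one, h, rogersL_half]
  ring

lemma hasDerivAt_dilogGap {y : ℝ} (hy : y ∈ Ioo (0 : ℝ) 1) :
    HasDerivAt dilogGap
      (((1 - y ^ 2) ^ 2 * log (1 - y) + 2 * y * log y
        - (1 - y ^ 2) * (1 + y ^ 2) * log (1 + y) + y ^ 2 * (1 - y ^ 2)) / (2 * y * (1 - y ^ 2)))
      y := by
  obtain ⟨hy0, hy1⟩ := hy
  have h1y : 1 + y ≠ 0 := by linarith
  have h1y' : 1 - y ≠ 0 := by linarith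
  have hsq : 1 - y ^ 2 ≠ 0 := by nlinarith
  have hq : HasDerivAt (fun z : ℝ => z / (1 + z)) (1 / (1 + y) ^ 2) y := by
    refine ((hasDerivAt_id y).div ((hasDerivAt_id y).const_add 1) h1y).congr_deriv ?_
    simp only [id]
    ring
  have hqmem : y / (1 + y) ∈ Ioo (0 : ℝ) 1 :=
    ⟨by positivity, (div_lt_one (by linarith)).2 (by linarith)⟩
  have hpow : HasDerivAt (fun z : ℝ => 1 - z ^ 2) (-(2 * y)) y := by
    simpa using (hasDerivAt_pow 2 y).const_sub 1
  have hlast := (hpow.mul ((hpow.log hsq).const_sub 2)).div_const 4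
  refine ((((hasDerivAt_const y (π ^ 2 / 4)).sub (hasDerivAt_rogersL ⟨hy0, hy1⟩)).sub
    ((hasDerivAt_rogersL hqmem).comp y hq)).sub hlast).congr_deriv ?_
  have e1 : 1 - y / (1 + y) = 1 / (1 + y) := by field_simp; ring
  have e2 : log (y / (1 + y)) = log y - log (1 + y) := log_div hy0.ne' h1y
  have e3 : log (1 - y / (1 + y)) = -log (1 + y) := by rw [e1, one_div, log_inv]
  have e4 : log (1 - y ^ 2) = log (1 - y) + log (1 + y) := by
    rw [show 1 - y ^ 2 = (1 - y) * (1 + y) by ring, log_mul h1y' h1y]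
  rw [e2, e3, e1, e4]
  field_simp
  ring

lemma sq_le_one_add_sq_mul_log_one_add {y : ℝ} (hy : 0 ≤ y) :
    y ^ 2 ≤ (1 + y ^ 2) * log (1 + y) := by
  have hlog := le_log_one_add_of_nonneg hy
  have hfrac : y ^ 2 ≤ (1 + y ^ 2) * (2 * y / (y + 2)) := by
    rw [mul_div_assoc', le_div_iff₀ (by linarith)]
    nlinarith [sq_nonneg (1 - y)]
  exact hfrac.trans (mul_le_mul_of_nonneg_left hlog (by positivity))

lemma antitoneOn_dilogGap : AntitoneOn dilogGap (Icc 0 1) := by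
  refine antitoneOn_of_deriv_nonpos (convex_Icc 0 1) continuousOn_dilogGap ?_ ?_ <;>
    rw [interior_Icc]
  · exact fun y hy => (hasDerivAt_dilogGap hy).differentiableAt.differentiableWithinAt
  intro y hy
  rw [(hasDerivAt_dilogGap hy).deriv]
  obtain ⟨hy0, hy1⟩ := hy
  have hsq : 0 ≤ 1 - y ^ 2 := by nlinarith
  have hlog_one_sub : log (1 - y) ≤ 0 := log_nonpos (by linarith) (by linarith)
  have hlog : log y ≤ 0 := log_nonpos hy0.le hy1.le
  have hkey := mul_le_mul_of_nonneg_left (sq_le_one_add_sq_mul_log_one_add hy0.le) hsq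
  refine div_nonpos_of_nonpos_of_nonneg ?_ (by positivity)
  nlinarith [mul_nonpos_of_nonneg_of_nonpos (sq_nonneg (1 - y ^ 2)) hlog_one_sub,
    mul_nonpos_of_nonneg_of_nonpos (by linarith : 0 ≤ 2 * y) hlog]

lemma dilogGap_nonneg {x : ℝ} (hx : x ∈ Icc (0 : ℝ) 1) : 0 ≤ dilogGap x :=
  dilogGap_one ▸ antitoneOn_dilogGap hx (right_mem_Icc.2 zero_le_one) hx.2

noncomputable def phi (L : ℝ) : ℝ :=
  π ^ 2 / 4 - rogersL (√(1 - exp (-L))) - rogersL (√(1 - exp (-L)) / (1 + √(1 - exp (-L))))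

lemma add_two_mul_exp_neg_div_four_le_phi {L : ℝ} (hL : 0 ≤ L) :
    (L + 2) * exp (-L) / 4 ≤ phi L := by
  have hexp : exp (-L) ≤ 1 := exp_le_one_iff.2 (by linarith)
  have hx2 : √(1 - exp (-L)) ^ 2 = 1 - exp (-L) := sq_sqrt (by linarith)
  have hx : √(1 - exp (-L)) ∈ Icc (0 : ℝ) 1 :=
    ⟨sqrt_nonneg _, sqrt_le_one.2 (by linarith [exp_pos (-L)])⟩
  have h := dilogGap_nonneg hx
  rw [dilogGap, hx2, sub_sub_cancel, log_exp] at h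
  rw [phi]
  linarith

lemma antitoneOn_add_two_mul_exp_neg :
    AntitoneOn (fun L : ℝ => (L + 2) * exp (-L)) (Ici (-1)) := by
  intro a ha b _ hab
  have hsplit : exp (-a) = exp (b - a) * exp (-b) := by rw [← exp_add]; ring_nf
  have hlin : b + 2 ≤ (a + 2) * (b - a + 1) := by nlinarith [mem_Ici.1 ha]
  have hexp : (a + 2) * (b - a + 1) ≤ (a + 2) * exp (b - a) :=
    mul_le_mul_of_nonneg_left (add_one_le_exp _) (by linarith [mem_Ici.1 ha])
  simp only [hsplit, ← mul_assoc]
  exact mul_le_mul_of_nonneg_right (hlin.trans hexp) (exp_pos _).le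

lemma finite_and_natCard_mul_le_of_hasSum {ι : Type*} {f : ι → ℝ} {a c : ℝ} {s : Set ι}
    (hf : HasSum f a) (hc : 0 < c) (hs : ∀ i ∈ s, c ≤ f i) (hf0 : ∀ i ∉ s, 0 ≤ f i) :
    s.Finite ∧ Nat.card s * c ≤ a := by
  have hfin : s.Finite := by
    refine (eventually_cofinite.1 (hf.summable.tendsto_cofinite_zero.eventually_lt_const hc)).subset
      fun i hi => not_lt.2 (hs i hi)
  refine ⟨hfin, ?_⟩
  rw [Nat.card_coe_set_eq, ncard_eq_toFinset_card _ hfin, ← nsmul_eq_mul]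
  calc hfin.toFinset.card • c ≤ ∑ i ∈ hfin.toFinset, f i :=
        Finset.card_nsmul_le_sum _ _ _ fun i hi => hs i (hfin.mem_toFinset.1 hi)
    _ ≤ a := sum_le_hasSum _ (fun i hi => hf0 i (by simpa using hi)) hf

theorem orthogeodesic_counting_general (g n : ℕ)
    (ℓ : ℕ → ℝ) (hℓ : ∀ j, 0 < ℓ j)
    (hsum :
      HasSum
        (fun j =>
          π ^ 2 / 4 - rogersL (Real.sqrt (1 - Real.exp (-ℓ j))) -
            rogersL (Real.sqrt (1 - Real.exp (-ℓ j)) /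
              (1 + Real.sqrt (1 - Real.exp (-ℓ j)))))
        (π ^ 2 / 4 * (2 * (g : ℝ) + n - 2)))
    (L : ℝ) (hL : 0 < L) :
    {j : ℕ | ℓ j ≤ L}.Finite ∧
      (Nat.card {j : ℕ | ℓ j ≤ L} : ℝ) ≤
        π ^ 2 * (2 * (g : ℝ) + n - 2) * Real.exp L / (L + 2) := by
  have hlower : ∀ j, (ℓ j + 2) * exp (-ℓ j) / 4 ≤ phi (ℓ j) := fun j =>
    add_two_mul_exp_neg_div_four_le_phi (hℓ j).le
  have hshort : ∀ j ∈ {j : ℕ | ℓ j ≤ L}, (L + 2) * exp (-L) / 4 ≤ phi (ℓ j) :=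
    fun j hj => (div_le_div_of_nonneg_right (antitoneOn_add_two_mul_exp_neg
      (mem_Ici.2 (by linarith [hℓ j])) (mem_Ici.2 (by linarith)) hj) zero_le_four).trans
      (hlower j)
  obtain ⟨hfin, hcard⟩ := finite_and_natCard_mul_le_of_hasSum (f := phi ∘ ℓ) hsum
    (by positivity) hshort fun j _ => le_trans (by have := hℓ j; positivity) (hlower j)
  refine ⟨hfin, (le_div_iff₀ (by positivity)).2 hcard |>.trans_eq ?_⟩
  rw [exp_neg]
  field_simp

/-- Counting corollary for surfaces of genus `g` with `n > 0` cusps: if the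
graded identity `∑ Φ(ℓ_j) = (π²/4)(2g+n−2)` holds, then
`#{j : ℓ_j ≤ L} ≤ π²(2g+n−2)·e^L/(L+2)` for every `L > 0`. -/
theorem orthogeodesic_counting (g n : ℕ) (hn : 1 ≤ n)
    (hχ : 0 < 2 * (g : ℝ) + n - 2) (ℓ : ℕ → ℝ) (hℓ : ∀ j, 0 < ℓ j)
    (hsum :
      HasSum
        (fun j =>
          π ^ 2 / 4 - rogersL (Real.sqrt (1 - Real.exp (-ℓ j))) -
            rogersL (Real.sqrt (1 - Real.exp (-ℓ j)) /
              (1 + Real.sqrt (1 - Real.exp (-ℓ j)))))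
        (π ^ 2 / 4 * (2 * (g : ℝ) + n - 2)))
    (L : ℝ) (hL : 0 < L) :
    {j : ℕ | ℓ j ≤ L}.Finite ∧
      (Nat.card {j : ℕ | ℓ j ≤ L} : ℝ) ≤
        π ^ 2 * (2 * (g : ℝ) + n - 2) * Real.exp L / (L + 2) :=
  orthogeodesic_counting_general g n ℓ hℓ hsum L hL
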